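/- Let ρ₁, ρ₂, v₁, v₂ be strictly positive real numbers. Define V(R) = (ρ₁ + ρ₂·R)·(v₁ + v₂/R) for R > 0, R* = √((ρ₁·v₂)/(ρ₂·v₁)), and Γ = (ρ₁·v₁ + ρ₂·v₂)/(ρ₂·v₁·R*). Then for every real α > 0, V(α·R*)/V(R*) = (Γ + α + α⁻¹)/(Γ + 2); moreover Γ = √((ρ₂·v₂)/(ρ₁·v₁)) + √((ρ₁·v₁)/(ρ₂·v₂)), and hence Γ ≥ 2. -/

import Mathlib

/-!
Expanding `V` and using `ρ₂ v₁ R*² = ρ₁ v₂` gives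
`V(α R*) = (ρ₁ v₁ + ρ₂ v₂) + ρ₂ v₁ R* (α + α⁻¹)`, so the ratio is obtained by dividing through by
`ρ₂ v₁ R*`. With `a = √(ρ₁ v₁)` and `b = √(ρ₂ v₂)` one has `ρ₂ v₁ R* = a b`, hence
`Γ = (a² + b²)/(a b) = b/a + a/b ≥ 2` by AM–GM.
-/

open Real

theorem two_le_div_add_div {K : Type*} [Field K] [LinearOrder K] [IsStrictOrderedRing K]
    {a b : K} (ha : 0 < a) (hb : 0 < b) : 2 ≤ a / b + b / a := by
  have h : a / b + b / a - 2 = (a - b) ^ 2 / (a * b) := by field_simp; ring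
  have : 0 ≤ (a - b) ^ 2 / (a * b) := by positivity
  linarith

theorem add_mul_div_add_mul {K : Type*} [Field K] (s d x y : K) (hd : d ≠ 0) :
    (s + d * x) / (s + d * y) = (s / d + x) / (s / d + y) := by
  rw [← mul_div_mul_right (s + d * x) _ (inv_ne_zero hd)]
  congr 1 <;> field_simp

def costVariance {K : Type*} [Field K] (ρ₁ ρ₂ v₁ v₂ R : K) : K :=
  (ρ₁ + ρ₂ * R) * (v₁ + v₂ / R)

theorem costVariance_mul_of_mul_sq_eq {K : Type*} [Field K] {ρ₁ ρ₂ v₁ v₂ R α : K}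
    (hR₀ : R ≠ 0) (hα : α ≠ 0) (hR : ρ₂ * v₁ * R ^ 2 = ρ₁ * v₂) :
    costVariance ρ₁ ρ₂ v₁ v₂ (α * R) = (ρ₁ * v₁ + ρ₂ * v₂) + ρ₂ * v₁ * R * (α + α⁻¹) := by
  unfold costVariance
  field_simp
  linear_combination -hR

theorem mul_sqrt_div_self {x : ℝ} (hx : 0 ≤ x) (y : ℝ) : x * √(y / x) = √(x * y) := by
  rcases hx.eq_or_lt with rfl | hx
  · simp
  rw [sqrt_div' y hx.le, sqrt_mul hx.le, mul_div_assoc', ← div_mul_eq_mul_div,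
    div_sqrt]

/-- The computational core of the proof of Proposition 4:
`V(α·R*)/V(R*) = (Γ + α + α⁻¹)/(Γ + 2)` with
`Γ = (ρ₁v₁ + ρ₂v₂)/(ρ₂v₁R*) = √(ρ₂v₂/(ρ₁v₁)) + √(ρ₁v₁/(ρ₂v₂)) ≥ 2`. -/
theorem prop4_core (ρ₁ ρ₂ v₁ v₂ : ℝ)
    (hρ₁ : 0 < ρ₁) (hρ₂ : 0 < ρ₂) (hv₁ : 0 < v₁) (hv₂ : 0 < v₂)
    (V : ℝ → ℝ) (hV : ∀ R : ℝ, 0 < R → V R = (ρ₁ + ρ₂ * R) * (v₁ + v₂ / R))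
    (Rstar : ℝ) (hRstar : Rstar = Real.sqrt (ρ₁ * v₂ / (ρ₂ * v₁)))
    (Γ : ℝ) (hΓ : Γ = (ρ₁ * v₁ + ρ₂ * v₂) / (ρ₂ * v₁ * Rstar)) :
    (∀ α : ℝ, 0 < α → V (α * Rstar) / V Rstar = (Γ + α + α⁻¹) / (Γ + 2)) ∧
    Γ = Real.sqrt (ρ₂ * v₂ / (ρ₁ * v₁)) + Real.sqrt (ρ₁ * v₁ / (ρ₂ * v₂)) ∧
    2 ≤ Γ := by
  have hRstar_pos : 0 < Rstar := hRstar ▸ sqrt_pos.mpr (by positivity)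
  have hRstar_sq : ρ₂ * v₁ * Rstar ^ 2 = ρ₁ * v₂ := by
    rw [hRstar, sq_sqrt (by positivity), mul_div_cancel₀ _ (by positivity)]
  have hD : ρ₂ * v₁ * Rstar = √(ρ₁ * v₁) * √(ρ₂ * v₂) := by
    rw [hRstar, mul_sqrt_div_self (by positivity), ← sqrt_mul (by positivity)]
    ring_nf
  have hΓ_eq : Γ = √(ρ₂ * v₂) / √(ρ₁ * v₁) + √(ρ₁ * v₁) / √(ρ₂ * v₂) := by
    have ha : 0 < √(ρ₁ * v₁) := sqrt_pos.mpr (by positivity)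
    have hb : 0 < √(ρ₂ * v₂) := sqrt_pos.mpr (by positivity)
    rw [hΓ, hD]
    field_simp
    rw [sq_sqrt (by positivity), sq_sqrt (by positivity), add_comm]
  refine ⟨fun α hα => ?_, ?_, ?_⟩
  · have hV_mul : ∀ β : ℝ, 0 < β →
        V (β * Rstar) = (ρ₁ * v₁ + ρ₂ * v₂) + ρ₂ * v₁ * Rstar * (β + β⁻¹) := fun β hβ => by
      rw [hV _ (by positivity)]
      exact costVariance_mul_of_mul_sq_eq hRstar_pos.ne' hβ.ne' hRstar_sq
    have hV_one := hV_mul 1 one_pos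
    rw [one_mul, inv_one, one_add_one_eq_two] at hV_one
    rw [hV_mul α hα, hV_one, hΓ, add_mul_div_add_mul _ _ _ _ (by positivity), add_assoc]
  · rw [hΓ_eq, sqrt_div' _ (by positivity), sqrt_div' _ (by positivity)]
  · exact hΓ_eq ▸ two_le_div_add_div (sqrt_pos.mpr (by positivity)) (sqrt_pos.mpr (by positivity))
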